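/- Let f : ℝⁿ → ℝ ∪ {+∞} be a proper convex function that is symmetric (f(x) = f(Px) for every n×n permutation matrix P), with associated spectral vector cone K_f and spectral matrix cone K_F. Then for every (t, v, X) ∈ ℝ × ℝ × Sⁿ one has (t, v, X) ∈ K_F if and only if (t, v, λ(X)) ∈ K_f, where λ(X) is the vector of eigenvalues of X in nonincreasing order. -/

import Mathlib

/-
Fix a spectral decomposition `X = U diag(λ(X) ∘ σ⁻¹) Uᵀ`. The continuous map
`(t, v, x) ↦ (t, v, U diag(x ∘ σ⁻¹) Uᵀ)` sends `(t, v, λ(X))` to `(t, v, X)` and the generating set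
of `K_f` into that of `K_F`, because the eigenvalues of `U diag(y) Uᵀ` are a permutation of `y` and
`f` is permutation invariant. Conversely `λ` is continuous on symmetric matrices: along a
subsequence the diagonalizing orthogonal matrices converge (the orthogonal group is compact) to one
diagonalizing the limit, and sorting is continuous. So `(t, v, X) ↦ (t, v, λ(X))` carries limits of
the generating set of `K_F` to limits of the generating set of `K_f`.
-/

open Matrix Finset

/-- The entries of `x` sorted in nonincreasing order. -/
noncomputable def sortDesc {n : ℕ} (x : Fin n → ℝ) : Fin n → ℝ :=
  fun i => (x ∘ Tuple.sort x) i.rev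

open Classical in
/-- The eigenvalues of a real symmetric matrix in nonincreasing order
(junk value `0` if the matrix is not symmetric). -/
noncomputable def eigsDesc {n : ℕ} (X : Matrix (Fin n) (Fin n) ℝ) : Fin n → ℝ :=
  if h : X.IsHermitian then sortDesc h.eigenvalues else 0

/-- The spectral vector cone `K_f` associated with the proper convex function with
value `f` on its domain `S` (and `+∞` outside `S`). -/
def vecCone {n : ℕ} (S : Set (Fin n → ℝ)) (f : (Fin n → ℝ) → ℝ) :
    Set (ℝ × ℝ × (Fin n → ℝ)) :=
  closure {p | 0 < p.2.1 ∧ p.2.1⁻¹ • p.2.2 ∈ S ∧ p.2.1 * f (p.2.1⁻¹ • p.2.2) ≤ p.1}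

/-- The spectral matrix cone `K_F`, where `F X = f (λ(X))` with `λ(X)` the eigenvalues
of the symmetric matrix `X` in nonincreasing order. -/
noncomputable def matCone {n : ℕ} (S : Set (Fin n → ℝ)) (f : (Fin n → ℝ) → ℝ) :
    Set (ℝ × ℝ × Matrix (Fin n) (Fin n) ℝ) :=
  closure {p | p.2.2.IsHermitian ∧ 0 < p.2.1 ∧ p.2.1⁻¹ • eigsDesc p.2.2 ∈ S ∧
    p.2.1 * f (p.2.1⁻¹ • eigsDesc p.2.2) ≤ p.1}

open Filter Topology

instance Matrix.firstCountableTopology {m m' R : Type*} [Countable m] [Countable m']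
    [TopologicalSpace R] [FirstCountableTopology R] : FirstCountableTopology (Matrix m m' R) :=
  inferInstanceAs (FirstCountableTopology (m → m' → R))

section SortDesc

variable {n : ℕ}

lemma exists_perm_sortDesc_eq (x : Fin n → ℝ) : ∃ σ : Equiv.Perm (Fin n), sortDesc x = x ∘ σ :=
  ⟨Fin.revPerm.trans (Tuple.sort x), rfl⟩

lemma antitone_sortDesc (x : Fin n → ℝ) : Antitone (sortDesc x) :=
  fun _ _ hij => Tuple.monotone_sort x (Fin.rev_le_rev.mpr hij)

lemma sortDesc_eq_of_antitone {x : Fin n → ℝ} {σ : Equiv.Perm (Fin n)}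
    (h : Antitone (x ∘ σ)) : sortDesc x = x ∘ σ := by
  have hmono : Monotone (x ∘ (Fin.revPerm.trans σ)) := fun i j hij => h (Fin.rev_le_rev.mpr hij)
  funext i
  simpa [sortDesc] using congrFun (Tuple.unique_monotone (Tuple.monotone_sort x) hmono) i.rev

lemma sortDesc_eq_of_perm {x y : Fin n → ℝ} (h : (List.ofFn x).Perm (List.ofFn y)) :
    sortDesc x = sortDesc y := by
  have hsorted : List.ofFn (x ∘ Tuple.sort x) = List.ofFn (y ∘ Tuple.sort y) :=
    List.Perm.eq_of_sortedLE (Tuple.monotone_sort x).sortedLE_ofFn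
      (Tuple.monotone_sort y).sortedLE_ofFn
      ((((Tuple.sort x).ofFn_comp_perm x).trans h).trans ((Tuple.sort y).ofFn_comp_perm y).symm)
  funext i
  exact congrFun (List.ofFn_injective hsorted) i.rev

lemma sortDesc_comp_perm (x : Fin n → ℝ) (σ : Equiv.Perm (Fin n)) :
    sortDesc (x ∘ σ) = sortDesc x :=
  sortDesc_eq_of_perm (σ.ofFn_comp_perm x)

lemma isClosed_setOf_antitone_comp (σ : Equiv.Perm (Fin n)) :
    IsClosed {x : Fin n → ℝ | Antitone (x ∘ σ)} := by
  simp only [Antitone, Set.ofPred_forall]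
  exact isClosed_iInter fun i => isClosed_iInter fun j => isClosed_iInter fun _ =>
    isClosed_le (continuous_apply _) (continuous_apply _)

/-- On the closed set where `x ∘ σ` is antitone, `sortDesc x = x ∘ σ`; finitely many such sets
cover the space. -/
theorem continuous_sortDesc : Continuous (sortDesc : (Fin n → ℝ) → Fin n → ℝ) := by
  refine (locallyFinite_of_finite fun σ : Equiv.Perm (Fin n) => {x | Antitone (x ∘ σ)}).continuous
    ?_ isClosed_setOf_antitone_comp fun σ => ?_
  · refine Set.eq_univ_of_forall fun x => Set.mem_iUnion.mpr ?_
    obtain ⟨σ, hσ⟩ := exists_perm_sortDesc_eq x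
    exact ⟨σ, show Antitone (x ∘ σ) from hσ ▸ antitone_sortDesc x⟩
  · exact (continuous_pi fun i => continuous_apply (σ i)).continuousOn.congr
      fun x hx => sortDesc_eq_of_antitone hx

end SortDesc

section EigsDesc

open Polynomial

variable {n : ℕ}

lemma eigsDesc_of_isHermitian {X : Matrix (Fin n) (Fin n) ℝ} (hX : X.IsHermitian) :
    eigsDesc X = sortDesc hX.eigenvalues := by
  rw [eigsDesc, dif_pos hX]

lemma roots_prod_X_sub_C_ofFn {R : Type*} [CommRing R] [IsDomain R] (d : Fin n → R) :
    (∏ i, (X - C (d i))).roots = (List.ofFn d : Multiset R) := by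
  rw [← Fin.univ_val_map, ← roots_multiset_prod_X_sub_C (univ.val.map d), Multiset.map_map]
  rfl

lemma eigsDesc_eq_of_charpoly_eq {A : Matrix (Fin n) (Fin n) ℝ} (hA : A.IsHermitian)
    {d : Fin n → ℝ} (h : A.charpoly = ∏ i, (X - C (d i))) : eigsDesc A = sortDesc d := by
  have hroots := roots_prod_X_sub_C_ofFn d
  rw [← h, hA.charpoly_eq] at hroots
  simp only [RCLike.ofReal_real_eq_id, id] at hroots
  rw [eigsDesc_of_isHermitian hA,
    sortDesc_eq_of_perm (Multiset.coe_eq_coe.mp ((roots_prod_X_sub_C_ofFn _).symm.trans hroots))]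

lemma charpoly_conj_of_mem_unitaryGroup {m R : Type*} [Fintype m] [DecidableEq m] [CommRing R]
    [StarRing R] {U : Matrix m m R} (hU : U ∈ unitaryGroup m R) (A : Matrix m m R) :
    (U * A * star U).charpoly = A.charpoly := by
  rw [mul_assoc, charpoly_mul_comm, mul_assoc, Unitary.star_mul_self_of_mem hU, mul_one]

lemma isHermitian_mul_diagonal_mul_star {m : Type*} [Fintype m] [DecidableEq m]
    (U : Matrix m m ℝ) (d : m → ℝ) : (U * diagonal d * star U).IsHermitian := by
  simpa only [star_eq_conjTranspose] using
    isHermitian_mul_mul_conjTranspose U (isHermitian_diagonal d)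

lemma eigsDesc_conj_diagonal {U : Matrix (Fin n) (Fin n) ℝ} (hU : U ∈ unitaryGroup (Fin n) ℝ)
    (d : Fin n → ℝ) : eigsDesc (U * diagonal d * star U) = sortDesc d :=
  eigsDesc_eq_of_charpoly_eq (isHermitian_mul_diagonal_mul_star U d)
    (by rw [charpoly_conj_of_mem_unitaryGroup hU, charpoly_diagonal])

lemma Matrix.IsHermitian.eq_eigenvectorUnitary_mul_diagonal_mul_star {m : Type*} [Fintype m]
    [DecidableEq m] {A : Matrix m m ℝ} (hA : A.IsHermitian) :
    A = (hA.eigenvectorUnitary : Matrix m m ℝ) * diagonal hA.eigenvalues *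
      star (hA.eigenvectorUnitary : Matrix m m ℝ) := by
  simpa using hA.spectral_theorem

lemma Matrix.IsHermitian.star_eigenvectorUnitary_mul_mul_eigenvectorUnitary {m : Type*}
    [Fintype m] [DecidableEq m] {A : Matrix m m ℝ} (hA : A.IsHermitian) :
    star (hA.eigenvectorUnitary : Matrix m m ℝ) * A * hA.eigenvectorUnitary =
      diagonal hA.eigenvalues := by
  simpa using hA.conjStarAlgAut_star_eigenvectorUnitary

lemma isCompact_unitaryGroup {m 𝕜 : Type*} [Fintype m] [DecidableEq m] [RCLike 𝕜] :
    IsCompact (unitaryGroup m 𝕜 : Set (Matrix m m 𝕜)) := by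
  have hclosed : IsClosed (unitaryGroup m 𝕜 : Set (Matrix m m 𝕜)) := isClosed_unitary
  open scoped Matrix.Norms.Elementwise in
  exact (isCompact_closedBall (0 : Matrix m m 𝕜) 1).of_isClosed_subset hclosed
    fun U hU => mem_closedBall_zero_iff.mpr (entrywise_sup_norm_bound_of_unitary hU)

theorem tendsto_eigsDesc {Y : ℕ → Matrix (Fin n) (Fin n) ℝ} {X : Matrix (Fin n) (Fin n) ℝ}
    (hY : ∀ k, (Y k).IsHermitian) (hlim : Tendsto Y atTop (𝓝 X)) :
    Tendsto (eigsDesc ∘ Y) atTop (𝓝 (eigsDesc X)) := by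
  refine tendsto_of_subseq_tendsto fun ns hns => ?_
  set W : ℕ → Matrix (Fin n) (Fin n) ℝ := fun k => (hY (ns k)).eigenvectorUnitary
  obtain ⟨Q, hQ, φ, hφ, hWQ⟩ :=
    isCompact_unitaryGroup.tendsto_subseq fun k => (hY (ns k)).eigenvectorUnitary.2
  have hYφ : Tendsto (fun k => Y (ns (φ k))) atTop (𝓝 X) :=
    hlim.comp (hns.comp hφ.tendsto_atTop)
  have hconj : Tendsto (fun k => star (W (φ k)) * Y (ns (φ k)) * W (φ k)) atTop
      (𝓝 (star Q * X * Q)) :=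
    (hWQ.star.mul hYφ).mul hWQ
  simp only [W, IsHermitian.star_eigenvectorUnitary_mul_mul_eigenvectorUnitary] at hconj
  have hdiag : star Q * X * Q = diagonal (star Q * X * Q).diag :=
    (isClosed_eq continuous_id (continuous_id.matrix_diag.matrix_diagonal)).mem_of_tendsto hconj
      (Eventually.of_forall fun k => by simp)
  have hX : X = Q * diagonal (star Q * X * Q).diag * star Q := by
    rw [← hdiag, ← mul_assoc, ← mul_assoc, Unitary.mul_star_self_of_mem hQ, one_mul, mul_assoc,
      Unitary.mul_star_self_of_mem hQ, mul_one]
  rw [hX, eigsDesc_conj_diagonal hQ]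
  have heig : Tendsto (fun k => (hY (ns (φ k))).eigenvalues) atTop (𝓝 (star Q * X * Q).diag) := by
    simpa [Function.comp_def] using (continuous_id.matrix_diag.tendsto _).comp hconj
  refine ⟨φ, ?_⟩
  simpa [Function.comp_def, eigsDesc_of_isHermitian (hY _)] using
    (continuous_sortDesc.tendsto _).comp heig

end EigsDesc

section Cones

variable {n : ℕ} {S : Set (Fin n → ℝ)} {f : (Fin n → ℝ) → ℝ}

def perspectiveEpigraph (S : Set (Fin n → ℝ)) (f : (Fin n → ℝ) → ℝ) :
    Set (ℝ × ℝ × (Fin n → ℝ)) :=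
  {p | 0 < p.2.1 ∧ p.2.1⁻¹ • p.2.2 ∈ S ∧ p.2.1 * f (p.2.1⁻¹ • p.2.2) ≤ p.1}

lemma vecCone_eq_closure : vecCone S f = closure (perspectiveEpigraph S f) := rfl

lemma matCone_eq_closure : matCone S f =
    closure {p | p.2.2.IsHermitian ∧ (p.1, p.2.1, eigsDesc p.2.2) ∈ perspectiveEpigraph S f} :=
  rfl

lemma comp_perm_mem_perspectiveEpigraph
    (hsymm : ∀ (e : Equiv.Perm (Fin n)) (x : Fin n → ℝ), x ∈ S → x ∘ e ∈ S ∧ f (x ∘ e) = f x)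
    {t v : ℝ} {x : Fin n → ℝ} (h : (t, v, x) ∈ perspectiveEpigraph S f) (σ : Equiv.Perm (Fin n)) :
    (t, v, x ∘ σ) ∈ perspectiveEpigraph S f := by
  obtain ⟨hv, hS, hf⟩ := h
  obtain ⟨hSσ, hfσ⟩ := hsymm σ _ hS
  exact ⟨hv, hSσ, hfσ ▸ hf⟩

theorem mem_vecCone_of_mem_matCone {t v : ℝ} {X : Matrix (Fin n) (Fin n) ℝ}
    (h : (t, v, X) ∈ matCone S f) : (t, v, eigsDesc X) ∈ vecCone S f := by
  rw [matCone_eq_closure] at h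
  rw [vecCone_eq_closure]
  obtain ⟨u, hu, hlim⟩ := mem_closure_iff_seq_limit.mp h
  refine mem_closure_of_tendsto (b := atTop)
    (f := fun k => ((u k).1, (u k).2.1, eigsDesc (u k).2.2)) ?_
    (Eventually.of_forall fun k => (hu k).2)
  exact hlim.fst_nhds.prodMk_nhds (hlim.snd_nhds.fst_nhds.prodMk_nhds
    (tendsto_eigsDesc (fun k => (hu k).1) hlim.snd_nhds.snd_nhds))

theorem mem_matCone_of_mem_vecCone
    (hsymm : ∀ (e : Equiv.Perm (Fin n)) (x : Fin n → ℝ), x ∈ S → x ∘ e ∈ S ∧ f (x ∘ e) = f x)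
    {t v : ℝ} {X : Matrix (Fin n) (Fin n) ℝ} (hX : X.IsHermitian)
    (h : (t, v, eigsDesc X) ∈ vecCone S f) : (t, v, X) ∈ matCone S f := by
  obtain ⟨σ, hσ⟩ := exists_perm_sortDesc_eq hX.eigenvalues
  set U : Matrix (Fin n) (Fin n) ℝ := ↑hX.eigenvectorUnitary
  have hU : U ∈ unitaryGroup (Fin n) ℝ := hX.eigenvectorUnitary.2
  let L : ℝ × ℝ × (Fin n → ℝ) → ℝ × ℝ × Matrix (Fin n) (Fin n) ℝ :=
    fun p => (p.1, p.2.1, U * diagonal (p.2.2 ∘ σ.symm) * star U)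
  have hLX : L (t, v, eigsDesc X) = (t, v, X) := by
    simp only [L, eigsDesc_of_isHermitian hX, hσ, Function.comp_assoc, Equiv.self_comp_symm,
      Function.comp_id, U, ← hX.eq_eigenvectorUnitary_mul_diagonal_mul_star]
  rw [vecCone_eq_closure] at h
  rw [← hLX, matCone_eq_closure]
  refine map_mem_closure (by fun_prop) h fun p hp => ⟨?_, ?_⟩
  · exact isHermitian_mul_diagonal_mul_star U _
  · simp only [L, eigsDesc_conj_diagonal hU, sortDesc_comp_perm]
    obtain ⟨τ, hτ⟩ := exists_perm_sortDesc_eq p.2.2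
    rw [hτ]
    exact comp_perm_mem_perspectiveEpigraph hsymm hp τ

end Cones

theorem stmt2_general {n : ℕ} (S : Set (Fin n → ℝ)) (f : (Fin n → ℝ) → ℝ)
    (hsymm : ∀ (e : Equiv.Perm (Fin n)) (x : Fin n → ℝ), x ∈ S →
      (x ∘ ⇑e) ∈ S ∧ f (x ∘ ⇑e) = f x)
    (t v : ℝ) (X : Matrix (Fin n) (Fin n) ℝ) (hX : X.IsHermitian) :
    (t, v, X) ∈ matCone S f ↔ (t, v, eigsDesc X) ∈ vecCone S f :=
  ⟨mem_vecCone_of_mem_matCone, mem_matCone_of_mem_vecCone hsymm hX⟩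

/-- For a proper convex symmetric function `f` (value `f` on its
domain `S`, `+∞` outside) and a symmetric matrix `X`, membership of `(t, v, X)` in the
spectral matrix cone `K_F` is equivalent to membership of `(t, v, λ(X))` in the spectral
vector cone `K_f`, where `λ(X)` is the vector of eigenvalues of `X` in nonincreasing
order. -/
theorem stmt2 {n : ℕ} (S : Set (Fin n → ℝ)) (f : (Fin n → ℝ) → ℝ)
    (hproper : S.Nonempty) (hconv : ConvexOn ℝ S f)
    (hsymm : ∀ (e : Equiv.Perm (Fin n)) (x : Fin n → ℝ), x ∈ S →
      (x ∘ ⇑e) ∈ S ∧ f (x ∘ ⇑e) = f x)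
    (t v : ℝ) (X : Matrix (Fin n) (Fin n) ℝ) (hX : X.IsHermitian) :
    (t, v, X) ∈ matCone S f ↔ (t, v, eigsDesc X) ∈ vecCone S f :=
  stmt2_general S f hsymm t v X hX
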